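/- Let A > 0, B > 0, (ρ_i), (τ_j) strictly increasing unbounded real sequences with ρ_0 = τ_0 = 0, and assume the pair is nondegenerate, i.e., it is not the case that both ρ_{i*} = A and τ_{j*} = B. Then the set S = { s > 0 : σ_{i,j}(s) = 0 for some i, j ≥ 0 with i + j > 0 } is countable and has no accumulation point in (0, ∞); its only accumulation points are 0 and +∞. -/

import Mathlib

/-!
Clearing the denominator, `σ_{i,j}(s) = 0` reads `(ρ_i - A) s + (τ_j - B) = 0`. Nondegeneracy
rules out `ρ_i = A ∧ τ_j = B` for every pair, so each pair contributes at most the single instant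
`-(τ_j - B) / (ρ_i - A)`; hence the set is countable. For `s ∈ [a, b]` with `a > 0`, the balance
`ρ_i s + τ_j = A s + B` of nonnegative terms forces `ρ_i ≤ A + B / a` and `τ_j ≤ A b + B`, which
only finitely many pairs satisfy, so no point of `(0, ∞)` is an accumulation point.
-/

open Set Filter Topology

theorem Monotone.apply_eq_of_least_ge {α β : Type*} [LinearOrder α] [PartialOrder β]
    {f : α → β} (hf : Monotone f) {c : β} {n i : α} (hn : c ≤ f n ∧ ∀ k < n, f k < c)
    (hi : f i = c) : f n = c :=
  le_antisymm (hi ▸ hf (not_lt.1 fun hin => (hn.2 i hin).ne hi)) hn.1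

theorem Monotone.finite_setOf_apply_le {α β : Type*} [LinearOrder α] [LocallyFiniteOrderBot α]
    [LinearOrder β] {f : α → β} (hf : Monotone f) (hub : ∀ C, ∃ i, C < f i) (C : β) :
    {i | f i ≤ C}.Finite := by
  obtain ⟨n, hn⟩ := hub C
  exact (finite_Iio n).subset fun i hi => lt_of_not_ge fun hni => (hn.trans_le (hf hni)).not_ge hi

theorem eq_neg_div_of_add_div_eq_zero {a b s : ℝ} (hs : s ≠ 0) (hab : ¬(a = 0 ∧ b = 0))
    (h : a + b / s = 0) : s = -b / a := by
  have ha : a ≠ 0 := by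
    rintro rfl
    exact hab ⟨rfl, by simpa [hs] using h⟩
  field_simp at h ⊢
  linarith

theorem eq_zero_of_accPt_of_finite_inter_Icc {S : Set ℝ} (hS : S ⊆ Ioi 0)
    (hfin : ∀ a b, 0 < a → (S ∩ Icc a b).Finite) {x : ℝ} (hx : AccPt x (𝓟 S)) : x = 0 := by
  rcases lt_trichotomy x 0 with hneg | hzero | hpos
  · have hempty : Iio 0 ∩ S ⊆ ∅ := fun s ⟨hs_neg, hs⟩ => lt_asymm hs_neg (mem_Ioi.1 (hS hs))
    exact absurd (finite_empty.subset hempty)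
      (Infinite.of_accPt (hx.nhds_inter (Iio_mem_nhds hneg)))
  · exact hzero
  · have hU : Icc (x / 2) (x + 1) ∈ 𝓝 x := Icc_mem_nhds (by linarith) (by linarith)
    refine absurd ?_ (Infinite.of_accPt (hx.nhds_inter hU))
    simpa only [inter_comm] using hfin _ _ (half_pos hpos)

def singularInstants (A B : ℝ) (ρ τ : ℕ → ℝ) : Set ℝ :=
  {s : ℝ | 0 < s ∧ ∃ i j : ℕ, 0 < i + j ∧ (ρ i - A) + (τ j - B) / s = 0}

namespace singularInstants

variable {A B : ℝ} {ρ τ : ℕ → ℝ}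

theorem exists_eq_root (hσ : ∀ i j, ¬(ρ i = A ∧ τ j = B)) {s : ℝ}
    (hs : s ∈ singularInstants A B ρ τ) :
    ∃ i j, (ρ i - A) + (τ j - B) / s = 0 ∧ s = -(τ j - B) / (ρ i - A) := by
  obtain ⟨hs_pos, i, j, -, h⟩ := hs
  refine ⟨i, j, h, eq_neg_div_of_add_div_eq_zero hs_pos.ne' ?_ h⟩
  simpa only [sub_eq_zero] using hσ i j

theorem countable (hσ : ∀ i j, ¬(ρ i = A ∧ τ j = B)) :
    (singularInstants A B ρ τ).Countable := by
  refine (countable_range fun p : ℕ × ℕ => -(τ p.2 - B) / (ρ p.1 - A)).mono fun s hs => ?_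
  obtain ⟨i, j, -, rfl⟩ := exists_eq_root hσ hs
  exact ⟨(i, j), rfl⟩

theorem apply_le_of_add_div_eq_zero {i j : ℕ} (hρi : 0 ≤ ρ i) (hτj : 0 ≤ τ j) {s : ℝ}
    (hs : 0 < s) (h : (ρ i - A) + (τ j - B) / s = 0) :
    ρ i ≤ A + B / s ∧ τ j ≤ A * s + B := by
  have balance : ρ i * s + τ j = A * s + B := by
    field_simp at h
    linarith
  refine ⟨?_, by nlinarith⟩
  rw [← sub_le_iff_le_add', le_div_iff₀ hs]
  nlinarith

theorem finite_inter_Icc (hA : 0 ≤ A) (hB : 0 ≤ B) (hρ : Monotone ρ) (hρ0 : ρ 0 = 0)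
    (hρub : ∀ C : ℝ, ∃ i, C < ρ i) (hτ : Monotone τ) (hτ0 : τ 0 = 0)
    (hτub : ∀ C : ℝ, ∃ j, C < τ j) (hσ : ∀ i j, ¬(ρ i = A ∧ τ j = B)) {a b : ℝ} (ha : 0 < a) :
    (singularInstants A B ρ τ ∩ Icc a b).Finite := by
  have hpairs := (hρ.finite_setOf_apply_le hρub (A + B / a)).prod
    (hτ.finite_setOf_apply_le hτub (A * b + B))
  refine (hpairs.image fun p : ℕ × ℕ => -(τ p.2 - B) / (ρ p.1 - A)).subset ?_
  rintro s ⟨hs, has, hsb⟩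
  obtain ⟨i, j, h, rfl⟩ := exists_eq_root hσ hs
  obtain ⟨hρi, hτj⟩ := apply_le_of_add_div_eq_zero (hρ0 ▸ hρ (Nat.zero_le i))
    (hτ0 ▸ hτ (Nat.zero_le j)) hs.1 h
  refine ⟨(i, j), ⟨?_, ?_⟩, rfl⟩
  · exact hρi.trans (add_le_add_right (div_le_div_of_nonneg_left hB ha has) A)
  · exact hτj.trans (add_le_add_left (mul_le_mul_of_nonneg_left hsb hA) B)

end singularInstants

/-- The set of singular instants is countable, with no accumulation point in
`(0, ∞)`; its only possible (finite) accumulation point is `0`. -/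
theorem singular_instants_countable_discrete
    (A B : ℝ) (hA : 0 < A) (hB : 0 < B)
    (ρ τ : ℕ → ℝ) (hρ : StrictMono ρ) (hρ0 : ρ 0 = 0) (hρub : ∀ C : ℝ, ∃ i, C < ρ i)
    (hτ : StrictMono τ) (hτ0 : τ 0 = 0) (hτub : ∀ C : ℝ, ∃ j, C < τ j)
    (istar jstar : ℕ)
    (histar : A ≤ ρ istar ∧ ∀ i < istar, ρ i < A)
    (hjstar : B ≤ τ jstar ∧ ∀ j < jstar, τ j < B)
    (hnondeg : ¬(ρ istar = A ∧ τ jstar = B)) :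
    Set.Countable {s : ℝ | 0 < s ∧ ∃ i j : ℕ, 0 < i + j ∧ (ρ i - A) + (τ j - B) / s = 0} ∧
    (∀ x : ℝ,
        AccPt x (Filter.principal
          {s : ℝ | 0 < s ∧ ∃ i j : ℕ, 0 < i + j ∧ (ρ i - A) + (τ j - B) / s = 0}) →
        x = 0) := by
  have hσ : ∀ i j, ¬(ρ i = A ∧ τ j = B) := fun i j ⟨hi, hj⟩ =>
    hnondeg ⟨hρ.monotone.apply_eq_of_least_ge histar hi,
      hτ.monotone.apply_eq_of_least_ge hjstar hj⟩
  refine ⟨singularInstants.countable hσ, fun x hx => ?_⟩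
  refine eq_zero_of_accPt_of_finite_inter_Icc (fun _ hs => hs.1) (fun _ _ ha => ?_) hx
  exact singularInstants.finite_inter_Icc hA.le hB.le hρ.monotone hρ0 hρub hτ.monotone hτ0 hτub
    hσ ha
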